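/- Let C satisfy C 0 = 1, C 1 = 4, C n = 3 C(n-1) + 2 C(n-2), and E satisfy E 0 = 1, E 1 = 4, E n = 2 C(n-1) + E(n-2) + 2^(n-1). Then the full density tends to 0: Filter.Tendsto (fun m => (fun m => E (Nat.log 2 m + 1)) m / ((4:ℝ)^(Nat.log 2 m))) Filter.atTop (nhds 0); more precisely, for any sequence G m of ones-counts with G m ≤ E (⌊log₂ m⌋ + 1) and total cells F m ≥ 4^(⌊log₂ m⌋), G m / F m → 0 as m → ∞. -/

import Mathlib

def C : ℕ → ℕ
  | 0 => 1
  | 1 => 4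
  | n + 2 => 3 * C (n + 1) + 2 * C n

def E : ℕ → ℕ
  | 0 => 1
  | 1 => 4
  | n + 2 => 2 * C (n + 1) + E n + 2 ^ (n + 1)

/-!
Both `C` and `E` grow at most like `(18/5)^n`: the dominant root of `x² = 3x + 2` is
`(3 + √17)/2 < 18/5`, and the extra terms of `E` are no larger. Since `18/5 < 4`, the ratio
`E (n + 1) / 4 ^ n` decays geometrically, and `⌊log₂ m⌋ → ∞`.
-/

open Filter Topology

lemma C_le (n : ℕ) : (C n : ℝ) ≤ 4 * (18 / 5) ^ n := by
  induction n using Nat.twoStepInduction with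
  | zero => norm_num [C]
  | one => norm_num [C]
  | more n ih₀ ih₁ =>
    calc (C (n + 2) : ℝ) = 3 * C (n + 1) + 2 * C n := by simp [C]
      _ ≤ 3 * (4 * (18 / 5) ^ (n + 1)) + 2 * (4 * (18 / 5) ^ n) := by gcongr
      _ = 4 * (18 / 5) ^ n * (3 * (18 / 5) + 2) := by ring
      _ ≤ 4 * (18 / 5) ^ n * (18 / 5) ^ 2 := by gcongr; norm_num
      _ = 4 * (18 / 5) ^ (n + 2) := by ring

lemma E_le (n : ℕ) : (E n : ℝ) ≤ 4 * (18 / 5) ^ n := by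
  induction n using Nat.twoStepInduction with
  | zero => norm_num [E]
  | one => norm_num [E]
  | more n ih₀ _ =>
    have h2 : (2 : ℝ) ^ n ≤ (18 / 5) ^ n := by gcongr; norm_num
    calc (E (n + 2) : ℝ) = 2 * C (n + 1) + E n + 2 * 2 ^ n := by push_cast [E, pow_succ]; ring
      _ ≤ 2 * (4 * (18 / 5) ^ (n + 1)) + 4 * (18 / 5) ^ n + 2 * (18 / 5) ^ n := by
        gcongr; exact C_le _
      _ = (18 / 5) ^ n * (8 * (18 / 5) + 6) := by ring
      _ ≤ (18 / 5) ^ n * (4 * (18 / 5) ^ 2) := by gcongr; norm_num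
      _ = 4 * (18 / 5) ^ (n + 2) := by ring

lemma E_succ_div_four_pow_le (n : ℕ) : (E (n + 1) : ℝ) / 4 ^ n ≤ 72 / 5 * (9 / 10) ^ n := by
  rw [div_le_iff₀ (by positivity)]
  calc (E (n + 1) : ℝ) ≤ 4 * (18 / 5) ^ (n + 1) := E_le _
    _ = 72 / 5 * (9 / 10) ^ n * 4 ^ n := by
      rw [pow_succ, show (18 / 5 : ℝ) = 9 / 10 * 4 by norm_num, mul_pow]; ring

lemma tendsto_E_succ_div_four_pow :
    Tendsto (fun n => (E (n + 1) : ℝ) / 4 ^ n) atTop (𝓝 0) := by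
  have h : Tendsto (fun n => 72 / 5 * (9 / 10 : ℝ) ^ n) atTop (𝓝 0) := by
    simpa using (tendsto_pow_atTop_nhds_zero_of_lt_one (by norm_num) (by norm_num)).const_mul
      (72 / 5 : ℝ)
  exact squeeze_zero (fun _ => by positivity) E_succ_div_four_pow_le h

lemma Nat.tendsto_log_atTop {b : ℕ} (hb : 1 < b) : Tendsto (Nat.log b) atTop atTop :=
  tendsto_atTop_atTop.2 fun k => ⟨b ^ k, fun _ hm => Nat.le_log_of_pow_le hb hm⟩

theorem full_density_tendsto_zero :
    Filter.Tendsto (fun m => (E (Nat.log 2 m + 1) : ℝ) / (4 : ℝ) ^ (Nat.log 2 m))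
      Filter.atTop (nhds 0) ∧
    ∀ G F : ℕ → ℕ, (∀ m, G m ≤ E (Nat.log 2 m + 1)) → (∀ m, 4 ^ (Nat.log 2 m) ≤ F m) →
      Filter.Tendsto (fun m => (G m : ℝ) / (F m : ℝ)) Filter.atTop (nhds 0) := by
  have hE := tendsto_E_succ_div_four_pow.comp (Nat.tendsto_log_atTop one_lt_two)
  refine ⟨hE, fun G F hG hF => squeeze_zero (fun _ => by positivity) (fun m => ?_) hE⟩
  have hF' : (4 : ℝ) ^ Nat.log 2 m ≤ F m := by exact_mod_cast hF m
  exact div_le_div₀ (by positivity) (by exact_mod_cast hG m) (by positivity) hF'
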